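/- Let C be a circuit all of whose channels are constant-delay channels, with a single input port i and a single output port o. (a) For every t ∈ ℝ, if two executions of C have input signals that agree at every measure point for time t (according to DG(t)), then their output signals agree at time t. (b) If DG(t) = DG(t̃) and two executions have input signals s_i, s̃_i with s_i(t − τ) = s̃_i(t̃ − τ) for every input leaf (i,τ) of DG(t), then the corresponding output signals satisfy s_o(t) = s̃_o(t̃). -/

import Mathlib

/-- A (binary, continuous-time) signal: it attains its new value at each transition time
(right-local constancy) and changes value only finitely often in every bounded
interval. -/
def IsSignal (s : ℝ → Bool) : Prop :=
  (∀ t : ℝ, ∃ ε > 0, ∀ u : ℝ, t ≤ u → u < t + ε → s u = s t) ∧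
  (∀ a b : ℝ, {t : ℝ | a ≤ t ∧ t ≤ b ∧
      ∀ ε > 0, ∃ u : ℝ, t - ε < u ∧ u < t ∧ s u ≠ s t}.Finite)

/-- A circuit all of whose channels are constant-delay channels: edge `k` into vertex
`v` has delay `delay v k > 0` and initial value `init v k`. -/
structure CDCircuit where
  V : Type
  [instFintype : Fintype V]
  [instDecEq : DecidableEq V]
  inp : V → Prop
  out : V → Prop
  preds : V → List V
  gate : V → List Bool → Bool
  delay : V → ℕ → ℝ
  init : V → ℕ → Bool
  delay_pos : ∀ v k, 0 < delay v k
  inp_preds : ∀ v, inp v → preds v = []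
  out_preds : ∀ v, out v → (preds v).length = 1
  out_gate : ∀ v, out v → ∀ l : List Bool, gate v l = l.headI
  inp_not_out : ∀ v, ¬ (inp v ∧ out v)

/-- An execution of a constant-delay circuit. -/
def Execution (C : CDCircuit) (s : C.V → ℝ → Bool) : Prop :=
  (∀ v, IsSignal (s v)) ∧
  ∀ v, ¬ C.inp v → ∀ t : ℝ,
    s v t = C.gate v ((((C.preds v).zipIdx).map Prod.swap).map fun p =>
      if t < C.delay v p.1 then C.init v p.1 else s p.2 (t - C.delay v p.1))

/-- The vertices `(v, τ)` of the dependence graph `DG(t)` of the circuit `C` with output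
port `o`: `(o, 0)` is a vertex, and if `(v, τ)` is a vertex, `u` is the `k`-th
in-neighbor of `v`, and `τ + delay v k ≤ t`, then `(u, τ + delay v k)` is a vertex. -/
inductive DGVert (C : CDCircuit) (o : C.V) (t : ℝ) : C.V → ℝ → Prop
  | root : DGVert C o t o 0
  | step {v : C.V} {τ : ℝ} {k : ℕ} {u : C.V} :
      DGVert C o t v τ → (C.preds v)[k]? = some u →
      τ + C.delay v k ≤ t → DGVert C o t u (τ + C.delay v k)

/-- Equality of the dependence graphs `DG(t)` and `DG(t')`: they have the same vertices,
and each incoming edge of each vertex lies on the same side of the threshold (so both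
graphs also have the same intermediate edges and the same initial-value leaves). -/
def DGEq (C : CDCircuit) (o : C.V) (t t' : ℝ) : Prop :=
  (∀ v τ, DGVert C o t v τ ↔ DGVert C o t' v τ) ∧
  (∀ (v : C.V) (τ : ℝ) (k : ℕ), DGVert C o t v τ → k < (C.preds v).length →
    (τ + C.delay v k ≤ t ↔ τ + C.delay v k ≤ t'))

/-- (a) the output value at time `t` of a constant-delay circuit depends
only on the input values at the measure points `t − τ` for the input leaves `(i, τ)` of
`DG(t)`; (b) if `DG(t) = DG(t2)` and two executions' input signals coincide at the
respective measure points, then the output signals satisfy `s_o(t) = s2_o(t2)`. -/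
theorem output_depends_only_on_measure_points
    (C : CDCircuit) (i o : C.V)
    (hi : C.inp i) (hiu : ∀ v, C.inp v → v = i)
    (ho : C.out o) (hou : ∀ v, C.out v → v = o) :
    (∀ (t : ℝ) (s s' : C.V → ℝ → Bool), Execution C s → Execution C s' →
      (∀ τ : ℝ, DGVert C o t i τ → s i (t - τ) = s' i (t - τ)) →
      s o t = s' o t) ∧
    (∀ (t t2 : ℝ) (s s2 : C.V → ℝ → Bool), Execution C s → Execution C s2 →
      DGEq C o t t2 →
      (∀ τ : ℝ, DGVert C o t i τ → s i (t - τ) = s2 i (t2 - τ)) →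
      s o t = s2 o t2) := by
  classical
  haveI := C.instFintype
  haveI := C.instDecEq
  -- a uniform positive lower bound on all relevant delays
  obtain ⟨d, hd, hdle⟩ : ∃ d : ℝ, 0 < d ∧
      ∀ v k, k < (C.preds v).length → d ≤ C.delay v k := by
    set D : Finset ℝ :=
      Finset.univ.biUnion fun v => (Finset.range (C.preds v).length).image (C.delay v) with hD
    have hmemD : ∀ v k, k < (C.preds v).length → C.delay v k ∈ D := by
      intro v k hk
      simp only [hD, Finset.mem_biUnion, Finset.mem_image, Finset.mem_range, Finset.mem_univ]
      exact ⟨v, trivial, k, hk, rfl⟩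
    by_cases h : D.Nonempty
    · refine ⟨min 1 (D.min' h), ?_, ?_⟩
      · have hmem := D.min'_mem h
        simp only [hD, Finset.mem_biUnion, Finset.mem_image, Finset.mem_range,
          Finset.mem_univ] at hmem
        obtain ⟨v, -, k, -, hk⟩ := hmem
        have hpos := C.delay_pos v k
        rw [hk] at hpos
        exact lt_min one_pos hpos
      · intro v k hk
        exact le_trans (min_le_right _ _) (D.min'_le _ (hmemD v k hk))
    · exact ⟨1, one_pos, fun v k hk => absurd ⟨_, hmemD v k hk⟩ h⟩
  have key : ∀ (t t2 : ℝ) (s s2 : C.V → ℝ → Bool), Execution C s → Execution C s2 →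
      DGEq C o t t2 →
      (∀ τ : ℝ, DGVert C o t i τ → s i (t - τ) = s2 i (t2 - τ)) →
      ∀ n : ℕ, ∀ v τ, DGVert C o t v τ → t - τ ≤ n * d → s v (t - τ) = s2 v (t2 - τ) := by
    intro t t2 s s2 hs hs2 heq hin n
    induction n with
    | zero =>
      intro v τ hv hle
      by_cases hvi : C.inp v
      · have hvi' := hiu v hvi; subst hvi'; exact hin τ hv
      · rw [hs.2 v hvi (t - τ), hs2.2 v hvi (t2 - τ)]
        congr 1
        apply List.map_congr_left
        intro p hp
        obtain ⟨k, u⟩ := p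
        have hku : (C.preds v)[k]? = some u := by
          obtain ⟨⟨a, b⟩, hab, he⟩ := List.mem_map.1 hp
          simp only [Prod.swap_prod_mk, Prod.mk.injEq] at he
          rw [← he.1, ← he.2]
          exact List.mk_mem_zipIdx_iff_getElem?.1 hab
        have hk : k < (C.preds v).length := by
          by_contra hnk
          rw [List.getElem?_eq_none (le_of_not_gt hnk)] at hku
          exact absurd hku (by simp)
        have hdk := hdle v k hk
        simp only [Nat.cast_zero, zero_mul] at hle
        have hcase : ¬ τ + C.delay v k ≤ t := by linarith
        have hcase2 : ¬ τ + C.delay v k ≤ t2 := fun h => hcase ((heq.2 v τ k hv hk).2 h)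
        have h1 : t - τ < C.delay v k := by linarith
        have h2 : t2 - τ < C.delay v k := by linarith
        simp [h1, h2]
    | succ n ih =>
      intro v τ hv hle
      by_cases hvi : C.inp v
      · have hvi' := hiu v hvi; subst hvi'; exact hin τ hv
      · rw [hs.2 v hvi (t - τ), hs2.2 v hvi (t2 - τ)]
        congr 1
        apply List.map_congr_left
        intro p hp
        obtain ⟨k, u⟩ := p
        have hku : (C.preds v)[k]? = some u := by
          obtain ⟨⟨a, b⟩, hab, he⟩ := List.mem_map.1 hp
          simp only [Prod.swap_prod_mk, Prod.mk.injEq] at he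
          rw [← he.1, ← he.2]
          exact List.mk_mem_zipIdx_iff_getElem?.1 hab
        have hk : k < (C.preds v).length := by
          by_contra hnk
          rw [List.getElem?_eq_none (le_of_not_gt hnk)] at hku
          exact absurd hku (by simp)
        have hdk := hdle v k hk
        by_cases hcase : τ + C.delay v k ≤ t
        · have hcase2 : τ + C.delay v k ≤ t2 := (heq.2 v τ k hv hk).1 hcase
          have h1 : ¬ t - τ < C.delay v k := by linarith
          have h2 : ¬ t2 - τ < C.delay v k := by linarith
          simp only [h1, h2, if_false]
          have hrec := ih u (τ + C.delay v k) (hv.step hku hcase)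
            (by push_cast; push_cast at hle; linarith)
          have e1 : t - τ - C.delay v k = t - (τ + C.delay v k) := by ring
          have e2 : t2 - τ - C.delay v k = t2 - (τ + C.delay v k) := by ring
          rw [e1, e2]; exact hrec
        · have hcase2 : ¬ τ + C.delay v k ≤ t2 := fun h => hcase ((heq.2 v τ k hv hk).2 h)
          have h1 : t - τ < C.delay v k := by linarith
          have h2 : t2 - τ < C.delay v k := by linarith
          simp [h1, h2]
  constructor
  · intro t s s' hs hs' hin
    obtain ⟨n, hn⟩ := exists_nat_ge (t / d)
    have hn' : t ≤ n * d := by rwa [div_le_iff₀ hd] at hn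
    have := key t t s s' hs hs'
      ⟨fun _ _ => Iff.rfl, fun _ _ _ _ _ => Iff.rfl⟩ hin n o 0 DGVert.root (by simpa using hn')
    simpa using this
  · intro t t2 s s2 hs hs2 heq hin
    obtain ⟨n, hn⟩ := exists_nat_ge (t / d)
    have hn' : t ≤ n * d := by rwa [div_le_iff₀ hd] at hn
    have := key t t2 s s2 hs hs2 heq hin n o 0 DGVert.root (by simpa using hn')
    simpa using this
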